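/- arXiv:2104.08567 — 2 statements merged into one kernel-verified Lean document; each statement's English description precedes it below -/
import Mathlib

section
/- Let f, g ∈ ℂ[[x,y]] and suppose f = A·x^{a₁}y^{a₂}, g = B·x^{b₁}y^{b₂} and g − f = C·x^{c₁}y^{c₂}, where A, B, C are units of ℂ[[x,y]]. Consider on ℤ_{≥0}² the componentwise partial order (p₁,p₂) ≤ (q₁,q₂) iff p₁ ≤ q₁ and p₂ ≤ q₂. Then the set of the three pairs {(a₁,a₂), (b₁,b₂), (c₁,c₂)} is totally ordered, and moreover two of these pairs are equal and are less than or equal to the third one. -/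
noncomputable section

/-- The ring `ℂ[[x,y]]` of formal power series in two variables. -/
abbrev R2 : Type := MvPowerSeries (Fin 2) ℂ

/-- The variable `x`. -/
def Xv : R2 := MvPowerSeries.X 0
/-- The variable `y`. -/
def Yv : R2 := MvPowerSeries.X 1

/-!
Compare coefficients at the exponent of each of the three terms in `f + (g - f) = g`. The
term `U · x^p` with `U` a unit has a nonzero coefficient at `p`, while `V · x^q` has coefficients
only at exponents `≥ q`. So each of the three exponents dominates one of the other two, and in a
partial order this forces two of them to coincide and lie below the third.
-/

section Order

variable {α : Type*} [PartialOrder α] {a b c : α}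

theorem eq_and_le_of_le_or_le (ha : b ≤ a ∨ c ≤ a) (hb : a ≤ b ∨ c ≤ b)
    (hc : a ≤ c ∨ b ≤ c) :
    (a = b ∧ a ≤ c) ∨ (a = c ∧ a ≤ b) ∨ (b = c ∧ b ≤ a) := by
  rcases ha with ha | ha <;> rcases hb with hb | hb <;> rcases hc with hc | hc
  · exact Or.inl ⟨le_antisymm hb ha, hc⟩
  · exact Or.inl ⟨le_antisymm hb ha, hb.trans hc⟩
  · exact Or.inl ⟨le_antisymm (hc.trans hb) ha, hc⟩
  · exact Or.inr (Or.inr ⟨le_antisymm hc hb, ha⟩)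
  · exact Or.inr (Or.inl ⟨le_antisymm hc ha, hb⟩)
  · exact Or.inr (Or.inl ⟨le_antisymm (hb.trans hc) ha, hb⟩)
  · exact Or.inr (Or.inl ⟨le_antisymm hc ha, hc.trans hb⟩)
  · exact Or.inr (Or.inr ⟨le_antisymm hc hb, hc.trans ha⟩)

theorem pairwise_total_of_eq_and_le
    (h : (a = b ∧ a ≤ c) ∨ (a = c ∧ a ≤ b) ∨ (b = c ∧ b ≤ a)) :
    (a ≤ b ∨ b ≤ a) ∧ (a ≤ c ∨ c ≤ a) ∧ (b ≤ c ∨ c ≤ b) := by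
  rcases h with ⟨rfl, h⟩ | ⟨rfl, h⟩ | ⟨rfl, h⟩ <;> simp [h]

end Order

namespace MvPowerSeries

variable {σ R : Type*} [CommSemiring R] [Nontrivial R]

theorem le_or_le_of_mul_monomial_eq_add {U V W : MvPowerSeries σ R} (hU : IsUnit U)
    {a b c : σ →₀ ℕ} (h : U * monomial a 1 = V * monomial b 1 + W * monomial c 1) :
    b ≤ a ∨ c ≤ a := by
  by_contra! hba
  have := congrArg (coeff a) h
  simp only [coeff_mul_monomial, map_add, le_refl, if_true, if_neg hba.1, if_neg hba.2,
    tsub_self, coeff_zero_eq_constantCoeff, mul_one, add_zero] at this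
  exact (hU.map constantCoeff).ne_zero this

end MvPowerSeries

open MvPowerSeries

def exponent (p : ℕ × ℕ) : Fin 2 →₀ ℕ := Finsupp.single 0 p.1 + Finsupp.single 1 p.2

theorem exponent_le_exponent {p q : ℕ × ℕ} : exponent p ≤ exponent q ↔ p ≤ q := by
  simp [Finsupp.le_def, exponent, Fin.forall_fin_two, Prod.le_def]

theorem Xv_pow_mul_Yv_pow (p : ℕ × ℕ) : Xv ^ p.1 * Yv ^ p.2 = monomial (exponent p) 1 := by
  rw [Xv, Yv, X_pow_eq, X_pow_eq, monomial_mul_monomial, one_mul, exponent]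

theorem stmt_6 (f g A B C : R2) (hA : IsUnit A) (hB : IsUnit B) (hC : IsUnit C)
    (a b c : ℕ × ℕ)
    (hf : f = A * Xv ^ a.1 * Yv ^ a.2)
    (hg : g = B * Xv ^ b.1 * Yv ^ b.2)
    (hgf : g - f = C * Xv ^ c.1 * Yv ^ c.2) :
    ((a ≤ b ∨ b ≤ a) ∧ (a ≤ c ∨ c ≤ a) ∧ (b ≤ c ∨ c ≤ b)) ∧
    ((a = b ∧ a ≤ c) ∨ (a = c ∧ a ≤ b) ∨ (b = c ∧ b ≤ a)) := by
  subst hf hg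
  simp only [mul_assoc, Xv_pow_mul_Yv_pow] at hgf
  have ha : b ≤ a ∨ c ≤ a := by
    have : A * monomial (exponent a) 1 =
        B * monomial (exponent b) 1 + -C * monomial (exponent c) 1 := by
      linear_combination -hgf
    simpa only [exponent_le_exponent] using le_or_le_of_mul_monomial_eq_add hA this
  have hb : a ≤ b ∨ c ≤ b := by
    have : B * monomial (exponent b) 1 =
        A * monomial (exponent a) 1 + C * monomial (exponent c) 1 := by
      linear_combination hgf
    simpa only [exponent_le_exponent] using le_or_le_of_mul_monomial_eq_add hB this
  have hc : a ≤ c ∨ b ≤ c := by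
    have : C * monomial (exponent c) 1 =
        -A * monomial (exponent a) 1 + B * monomial (exponent b) 1 := by
      linear_combination -hgf
    simpa only [exponent_le_exponent] using le_or_le_of_mul_monomial_eq_add hC this
  have h := eq_and_le_of_le_or_le ha hb hc
  exact ⟨pairwise_total_of_eq_and_le h, h⟩
end
end

section
/- Let U be an open neighborhood of 0 in ℂ², let f, g, u : U → ℂ be analytic with u(0) = 1, and set F = f/g and F̃ = u·F on the set where g does not vanish. Then for every t₀ ∈ ℂ: t₀ is an asymptotic critical value of F at the origin if and only if t₀ is an asymptotic critical value of F̃ at the origin. -/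
noncomputable section

/-- `t₀` is an asymptotic critical value of the meromorphic function `f/g` at
the origin of `ℂ²` if there is a sequence of points `z k ≠ 0` tending to `0`,
with `g (z k) ≠ 0`, such that `‖z k‖·‖∇(f/g)(z k)‖ → 0` and
`f (z k) / g (z k) → t₀`. -/
def AsymptoticCriticalValue (f g : ℂ × ℂ → ℂ) (t₀ : ℂ) : Prop :=
  ∃ z : ℕ → ℂ × ℂ,
    Filter.Tendsto z Filter.atTop (nhds 0) ∧
    (∀ n, z n ≠ 0) ∧ (∀ n, g (z n) ≠ 0) ∧
    Filter.Tendsto (fun n => ‖z n‖ * ‖fderiv ℂ (fun w => f w / g w) (z n)‖)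
      Filter.atTop (nhds 0) ∧
    Filter.Tendsto (fun n => f (z n) / g (z n)) Filter.atTop (nhds t₀)

/-! By the product rule, `‖z‖·‖∇(uF)(z)‖ ≤ ‖u(z)‖·‖z‖‖∇F(z)‖ + ‖F(z)‖·‖z‖·‖∇u(z)‖`. Along a
sequence witnessing `t₀` for `F`, the first term tends to `0` and so does the second, since
`F(z)` and `∇u(z)` stay bounded while `z → 0`; and `u(z)F(z) → t₀` because `u(0) = 1`. So the
same sequence witnesses `t₀` for `uF`. Conversely, `1/u` is analytic near `0` with value `1` at
`0`, and `(1/u)·uF = F` near `0`. -/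

open Filter Topology

section ProductRule

variable {𝕜 E ι : Type*} [NontriviallyNormedField 𝕜] [NormedAddCommGroup E] [NormedSpace 𝕜 E]

theorem norm_fderiv_mul_le {u F : E → 𝕜} {x : E} (hu : DifferentiableAt 𝕜 u x)
    (hF : DifferentiableAt 𝕜 F x) :
    ‖fderiv 𝕜 (fun w => u w * F w) x‖ ≤ ‖u x‖ * ‖fderiv 𝕜 F x‖ + ‖F x‖ * ‖fderiv 𝕜 u x‖ := by
  rw [fderiv_fun_mul hu hF]
  exact (norm_add_le _ _).trans_eq (by rw [norm_smul, norm_smul])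

theorem tendsto_norm_mul_norm_fderiv_mul {l : Filter ι} {z : ι → E} {u F : E → 𝕜} {a c : 𝕜}
    {L : E →L[𝕜] 𝕜} (hz : Tendsto z l (𝓝 0))
    (hu : ∀ᶠ i in l, DifferentiableAt 𝕜 u (z i)) (hF : ∀ᶠ i in l, DifferentiableAt 𝕜 F (z i))
    (hua : Tendsto (fun i => u (z i)) l (𝓝 a))
    (huL : Tendsto (fun i => fderiv 𝕜 u (z i)) l (𝓝 L))
    (hFc : Tendsto (fun i => F (z i)) l (𝓝 c))
    (hDF : Tendsto (fun i => ‖z i‖ * ‖fderiv 𝕜 F (z i)‖) l (𝓝 0)) :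
    Tendsto (fun i => ‖z i‖ * ‖fderiv 𝕜 (fun w => u w * F w) (z i)‖) l (𝓝 0) := by
  have hbound : Tendsto (fun i => ‖u (z i)‖ * (‖z i‖ * ‖fderiv 𝕜 F (z i)‖) +
      ‖F (z i)‖ * ‖z i‖ * ‖fderiv 𝕜 u (z i)‖) l (𝓝 0) := by
    simpa using (hua.norm.mul hDF).add ((hFc.norm.mul hz.norm).mul huL.norm)
  refine squeeze_zero' (Eventually.of_forall fun i => by positivity) ?_ hbound
  filter_upwards [hu, hF] with i hui hFi
  calc ‖z i‖ * ‖fderiv 𝕜 (fun w => u w * F w) (z i)‖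
      ≤ ‖z i‖ * (‖u (z i)‖ * ‖fderiv 𝕜 F (z i)‖ + ‖F (z i)‖ * ‖fderiv 𝕜 u (z i)‖) := by
        gcongr
        exact norm_fderiv_mul_le hui hFi
    _ = _ := by ring

end ProductRule

namespace AsymptoticCriticalValue

variable {f g u : ℂ × ℂ → ℂ} {t₀ : ℂ}

theorem congr_numerator {f₁ f₂ : ℂ × ℂ → ℂ} (hff : f₁ =ᶠ[𝓝 0] f₂)
    (h : AsymptoticCriticalValue f₁ g t₀) : AsymptoticCriticalValue f₂ g t₀ := by
  obtain ⟨z, hz, hz0, hgz, hDF, hF⟩ := h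
  have hff' : ∀ᶠ n in atTop, f₁ =ᶠ[𝓝 (z n)] f₂ := hz.eventually (eventually_eventuallyEq_nhds.2 hff)
  refine ⟨z, hz, hz0, hgz, hDF.congr' ?_, hF.congr' ?_⟩
  · filter_upwards [hff'] with n (hn : f₁ =ᶠ[𝓝 (z n)] f₂)
    rw [EventuallyEq.fderiv_eq (by filter_upwards [hn] with w hw; rw [hw])]
  · filter_upwards [hff'] with n (hn : f₁ =ᶠ[𝓝 (z n)] f₂)
    rw [hn.eq_of_nhds]

theorem mul_left (hf : AnalyticAt ℂ f 0) (hg : AnalyticAt ℂ g 0) (hu : AnalyticAt ℂ u 0)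
    (hu0 : u 0 = 1) (h : AsymptoticCriticalValue f g t₀) :
    AsymptoticCriticalValue (fun z => u z * f z) g t₀ := by
  obtain ⟨z, hz, hz0, hgz, hDF, hF⟩ := h
  have hanalytic : ∀ᶠ n in atTop, AnalyticAt ℂ f (z n) ∧ AnalyticAt ℂ g (z n) ∧
      AnalyticAt ℂ u (z n) :=
    hz.eventually (hf.eventually_analyticAt.and (hg.eventually_analyticAt.and
      hu.eventually_analyticAt))
  have hu1 : Tendsto (fun n => u (z n)) atTop (𝓝 1) := hu0 ▸ hu.continuousAt.tendsto.comp hz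
  refine ⟨z, hz, hz0, hgz, ?_, by simpa [mul_div_assoc] using hu1.mul hF⟩
  simp only [mul_div_assoc]
  refine tendsto_norm_mul_norm_fderiv_mul hz ?_ ?_ hu1
    (hu.fderiv.continuousAt.tendsto.comp hz) hF hDF
  · filter_upwards [hanalytic] with n hn
    exact hn.2.2.differentiableAt
  · filter_upwards [hanalytic] with n hn
    exact (hn.1.div hn.2.1 (hgz n)).differentiableAt

end AsymptoticCriticalValue

theorem stmt_8_general (U : Set (ℂ × ℂ)) (h0U : (0 : ℂ × ℂ) ∈ U)
    (f g u : ℂ × ℂ → ℂ)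
    (hf : AnalyticOnNhd ℂ f U) (hg : AnalyticOnNhd ℂ g U)
    (hu : AnalyticOnNhd ℂ u U) (hu0 : u 0 = 1) (t₀ : ℂ) :
    AsymptoticCriticalValue f g t₀ ↔
      AsymptoticCriticalValue (fun z => u z * f z) g t₀ := by
  have hu0' : u 0 ≠ 0 := by simp [hu0]
  refine ⟨.mul_left (hf 0 h0U) (hg 0 h0U) (hu 0 h0U) hu0, fun h => ?_⟩
  have hcancel : (fun z => (u z)⁻¹ * (u z * f z)) =ᶠ[𝓝 0] f := by
    filter_upwards [(hu 0 h0U).continuousAt.eventually_ne hu0'] with z hz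
    exact inv_mul_cancel_left₀ hz (f z)
  have hinv0 : (u 0)⁻¹ = 1 := by simp [hu0]
  exact (h.mul_left ((hu 0 h0U).mul (hf 0 h0U)) (hg 0 h0U) ((hu 0 h0U).inv hu0')
    hinv0).congr_numerator hcancel

theorem stmt_8 (U : Set (ℂ × ℂ)) (hU : IsOpen U) (h0U : (0 : ℂ × ℂ) ∈ U)
    (f g u : ℂ × ℂ → ℂ)
    (hf : AnalyticOnNhd ℂ f U) (hg : AnalyticOnNhd ℂ g U)
    (hu : AnalyticOnNhd ℂ u U) (hu0 : u 0 = 1) (t₀ : ℂ) :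
    AsymptoticCriticalValue f g t₀ ↔
      AsymptoticCriticalValue (fun z => u z * f z) g t₀ :=
  stmt_8_general U h0U f g u hf hg hu hu0 t₀
end
end
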